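/- arXiv:nlin/0011017 — 10 statements merged into one kernel-verified Lean document; each statement's English description precedes it below -/
import Mathlib

section
/- Let E be a finite-dimensional real inner product space with inner product g̃, let ω be a nondegenerate alternating bilinear form on E, and let P : E → E be a linear map that is idempotent (P ∘ P = P), g̃-symmetric (g̃(Px, y) = g̃(x, Py) for all x, y), and ω-orthogonal (ω(Px, y) = ω(x, Py) for all x, y). Then there exist a symmetric positive-definite bilinear form g on E and a linear map J : E → E such that: J ∘ J = −id; ω(x, y) = g(Jx, y) for all x, y; g(Jx, Jy) = g(x, y) for all x, y (g is hermitean with respect to J); g(Px, y) = g(x, Py) for all x, y (P is g-symmetric); and P ∘ J = J ∘ P. -/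
open RealInnerProductSpace

/-- Existence of a compatible triple `(g, J, ω)`: given a
nondegenerate alternating bilinear form `ω` on a finite-dimensional real inner
product space and a projector `P` that is idempotent, symmetric for the inner
product and ω-orthogonal, there exist a symmetric positive definite bilinear
form `g` and an almost complex structure `J` with `J² = -1`, `ω(x,y) = g(Jx,y)`,
`g` hermitean w.r.t. `J`, `P` `g`-symmetric, and `P ∘ J = J ∘ P`. -/
theorem stmt_1 {E : Type*} [NormedAddCommGroup E] [InnerProductSpace ℝ E]
    [FiniteDimensional ℝ E]
    (ω : E →ₗ[ℝ] E →ₗ[ℝ] ℝ)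
    (halt : ∀ x : E, ω x x = 0)
    (hnondeg : ∀ x : E, (∀ y : E, ω x y = 0) → x = 0)
    (P : E →ₗ[ℝ] E)
    (hidem : P ∘ₗ P = P)
    (hgsym : ∀ x y : E, ⟪P x, y⟫ = ⟪x, P y⟫)
    (hωorth : ∀ x y : E, ω (P x) y = ω x (P y)) :
    ∃ (g : E →ₗ[ℝ] E →ₗ[ℝ] ℝ) (J : E →ₗ[ℝ] E),
      (∀ x y : E, g x y = g y x) ∧
      (∀ x : E, x ≠ 0 → 0 < g x x) ∧
      (J ∘ₗ J = -LinearMap.id) ∧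
      (∀ x y : E, ω x y = g (J x) y) ∧
      (∀ x y : E, g (J x) (J y) = g x y) ∧
      (∀ x y : E, g (P x) y = g x (P y)) ∧
      (P ∘ₗ J = J ∘ₗ P) := by
  classical
  -- the operator A with ⟪A x, y⟫ = ω x y
  obtain ⟨A, hA⟩ : ∃ A : E →ₗ[ℝ] E, ∀ x y : E, ⟪A x, y⟫ = ω x y := by
    refine ⟨LinearMap.mk (AddHom.mk (fun x => (InnerProductSpace.toDual ℝ E).symm (LinearMap.toContinuousLinearMap (ω x))) ?_) ?_, ?_⟩
    · intro x y; simp [map_add]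
    · intro c x; simp
    · intro x y; exact InnerProductSpace.toDual_symm_apply
  -- ω is antisymmetric
  have hanti : ∀ x y : E, ω x y = -ω y x := by
    intro x y
    have h := halt (x + y)
    simp only [map_add, LinearMap.add_apply, halt] at h
    linarith
  -- A is skew-adjoint
  have hskew : ∀ x y : E, ⟪A x, y⟫ = -⟪x, A y⟫ := by
    intro x y
    rw [hA, real_inner_comm, hA, hanti]
  -- A is injective
  have hAinj : ∀ x : E, A x = 0 → x = 0 := by
    intro x hx
    refine hnondeg x fun y => ?_
    rw [← hA, hx, inner_zero_left]
  -- T = -A²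
  set T : E →ₗ[ℝ] E := -(A ∘ₗ A) with hTdef
  have hTapp : ∀ x : E, T x = -(A (A x)) := fun x => rfl
  have hTAA : ∀ x y : E, ⟪T x, y⟫ = ⟪A x, A y⟫ := by
    intro x y
    rw [hTapp, inner_neg_left, hskew, neg_neg]
  have hTsymm : T.IsSymmetric := by
    intro x y
    calc ⟪T x, y⟫ = ⟪A x, A y⟫ := hTAA x y
      _ = ⟪A y, A x⟫ := real_inner_comm _ _
      _ = ⟪T y, x⟫ := (hTAA y x).symm
      _ = ⟪x, T y⟫ := real_inner_comm _ _
  have hTposeq : ∀ x : E, ⟪T x, x⟫ = ⟪A x, A x⟫ := fun x => hTAA x x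
  have hTpos : ∀ x : E, x ≠ 0 → 0 < ⟪T x, x⟫ := by
    intro x hx
    rw [hTposeq]
    have hne : A x ≠ 0 := fun h => hx (hAinj x h)
    rw [real_inner_self_eq_norm_mul_norm]
    exact mul_pos (norm_pos_iff.mpr hne) (norm_pos_iff.mpr hne)
  have hTinj : ∀ x : E, T x = 0 → x = 0 := by
    intro x hx
    by_contra hxne
    have := hTpos x hxne
    rw [hx, inner_zero_left] at this
    exact lt_irrefl 0 this
  -- P commutes with A
  have hPA : ∀ x : E, A (P x) = P (A x) := by
    intro x
    refine ext_inner_right ℝ fun y => ?_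
    rw [hA, hωorth, ← hA, ← hgsym]
  -- P commutes with T, A commutes with T
  have hPT : ∀ x : E, P (T x) = T (P x) := by
    intro x; rw [hTapp, hTapp, map_neg, hPA, hPA]
  have hAT : ∀ x : E, A (T x) = T (A x) := by
    intro x; rw [hTapp, hTapp, map_neg]
  -- spectral data for T
  set n := Module.finrank ℝ E with hn
  set b := hTsymm.eigenvectorBasis rfl with hb
  set μ := hTsymm.eigenvalues rfl with hμ
  have hbeig : ∀ i, Module.End.HasEigenvector T (μ i) (b i) :=
    fun i => hTsymm.hasEigenvector_eigenvectorBasis rfl i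
  have hμpos : ∀ i, 0 < μ i := by
    intro i
    have hb1 : ⟪b i, b i⟫ = 1 := by
      rw [real_inner_self_eq_norm_mul_norm, b.orthonormal.1 i, mul_one]
    have h1 : ⟪T (b i), b i⟫ = μ i := by
      rw [Module.End.mem_eigenspace_iff.mp (hbeig i).1, real_inner_smul_left, hb1, mul_one]
    have := hTpos (b i) (hbeig i).2
    rwa [h1] at this
  -- the interpolation polynomial for the square root
  set s : Finset ℝ := Finset.image μ Finset.univ with hs
  set p : Polynomial ℝ := Lagrange.interpolate s id Real.sqrt with hp
  have heval : ∀ i, p.eval (μ i) = Real.sqrt (μ i) := by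
    intro i
    have hmem : μ i ∈ s := Finset.mem_image_of_mem μ (Finset.mem_univ i)
    have := Lagrange.eval_interpolate_at_node Real.sqrt (Set.injOn_id _) hmem
    exact this
  -- S := p(T), the square root of T
  set S : E →ₗ[ℝ] E := Polynomial.aeval T p with hS
  have hSb : ∀ i, S (b i) = Real.sqrt (μ i) • b i := by
    intro i
    rw [hS, Module.End.aeval_apply_of_hasEigenvector (hbeig i), heval]
  -- powers of T are symmetric and commute with commutants of T
  have hTpow : ∀ k : ℕ, (T ^ k : E →ₗ[ℝ] E).IsSymmetric := by
    intro k
    induction k with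
    | zero => intro x y; simp
    | succ k ih =>
      intro x y
      calc ⟪(T ^ (k + 1)) x, y⟫ = ⟪(T ^ k) (T x), y⟫ := by rw [pow_succ, Module.End.mul_apply]
        _ = ⟪T x, (T ^ k) y⟫ := ih _ _
        _ = ⟪x, T ((T ^ k) y)⟫ := hTsymm _ _
        _ = ⟪x, (T ^ (k + 1)) y⟫ := by rw [pow_succ', Module.End.mul_apply]
  have hSsymm : S.IsSymmetric := by
    rw [hS]
    induction p using Polynomial.induction_on' with
    | add q r hq hr => rw [map_add]; exact hq.add hr
    | monomial k a =>
      intro x y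
      rw [Polynomial.aeval_monomial]
      simp only [Module.End.mul_apply, Module.algebraMap_end_apply]
      rw [real_inner_smul_left, real_inner_smul_right, hTpow k]
  have hcomm : ∀ B : E →ₗ[ℝ] E, (∀ z, B (T z) = T (B z)) → ∀ z, B (S z) = S (B z) := by
    intro B hB
    have hpow : ∀ (k : ℕ) (z : E), B ((T ^ k) z) = (T ^ k) (B z) := by
      intro k
      induction k with
      | zero => intro z; simp
      | succ k ih =>
        intro z
        rw [pow_succ, Module.End.mul_apply, ih, hB, Module.End.mul_apply]
    rw [hS]
    induction p using Polynomial.induction_on' with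
    | add q r hq hr =>
      intro z
      rw [map_add, LinearMap.add_apply, map_add, hq, hr, LinearMap.add_apply]
    | monomial k a =>
      intro z
      rw [Polynomial.aeval_monomial]
      simp only [Module.End.mul_apply, Module.algebraMap_end_apply]
      rw [map_smul, hpow]
  -- S² = T
  have hSS : ∀ x : E, S (S x) = T x := by
    have : S ∘ₗ S = T := by
      apply b.toBasis.ext
      intro i
      simp only [OrthonormalBasis.coe_toBasis, LinearMap.comp_apply]
      rw [hSb, map_smul, hSb, Module.End.mem_eigenspace_iff.mp (hbeig i).1, smul_smul,
        Real.mul_self_sqrt (hμpos i).le]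
    intro x
    exact congrArg (fun f => f x) this
  -- S is bijective
  have hSinj : Function.Injective S := by
    rw [← LinearMap.ker_eq_bot, LinearMap.ker_eq_bot']
    intro x hx
    exact hTinj x (by rw [← hSS, hx, map_zero])
  have hSbij : Function.Bijective S :=
    ⟨hSinj, LinearMap.injective_iff_surjective.mp hSinj⟩
  set Se : E ≃ₗ[ℝ] E := LinearEquiv.ofBijective S hSbij with hSe
  have hSeApp : ∀ x : E, Se x = S x := fun x => rfl
  have hSiS : ∀ x : E, Se.symm (S x) = x := by
    intro x; rw [← hSeApp, Se.symm_apply_apply]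
  have hSSi : ∀ x : E, S (Se.symm x) = x := by
    intro x; rw [← hSeApp, Se.apply_symm_apply]
  have hSiSymm : ∀ x y : E, ⟪Se.symm x, y⟫ = ⟪x, Se.symm y⟫ := by
    intro x y
    conv_lhs => rw [← hSSi y]
    rw [← hSsymm, hSSi]
  have hPSi : ∀ x : E, P (Se.symm x) = Se.symm (P x) := by
    intro x
    apply hSinj
    rw [hSSi, ← hcomm P hPT, hSSi]
  have hASi : ∀ x : E, A (Se.symm x) = Se.symm (A x) := by
    intro x
    apply hSinj
    rw [hSSi, ← hcomm A hAT, hSSi]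
  -- the metric g and the complex structure J
  set g : E →ₗ[ℝ] E →ₗ[ℝ] ℝ := LinearMap.mk₂ ℝ (fun x y => ⟪S x, y⟫)
    (fun x x' y => show ⟪S (x + x'), y⟫ = ⟪S x, y⟫ + ⟪S x', y⟫ by
      rw [map_add, inner_add_left])
    (fun c x y => show ⟪S (c • x), y⟫ = c • ⟪S x, y⟫ by
      rw [map_smul, real_inner_smul_left, smul_eq_mul])
    (fun x y y' => show ⟪S x, y + y'⟫ = ⟪S x, y⟫ + ⟪S x, y'⟫ by rw [inner_add_right])
    (fun c x y => show ⟪S x, c • y⟫ = c • ⟪S x, y⟫ by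
      rw [real_inner_smul_right, smul_eq_mul]) with hg
  have hgapp : ∀ x y : E, g x y = ⟪S x, y⟫ := fun x y => rfl
  set J : E →ₗ[ℝ] E := (Se.symm : E →ₗ[ℝ] E) ∘ₗ A with hJ
  have hJapp : ∀ x : E, J x = Se.symm (A x) := fun x => rfl
  refine ⟨g, J, ?_, ?_, ?_, ?_, ?_, ?_, ?_⟩
  · intro x y
    rw [hgapp, hgapp, hSsymm, real_inner_comm]
  · -- positive definiteness
    intro x hx
    rw [hgapp]
    have hrepr : ∀ i, b.repr x i = ⟪b i, x⟫ := fun i => b.repr_apply_apply x i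
    have hSx : S x = ∑ i, (Real.sqrt (μ i) * b.repr x i) • b i := by
      conv_lhs => rw [← b.sum_repr x]
      rw [map_sum]
      refine Finset.sum_congr rfl fun i _ => ?_
      rw [map_smul, hSb, smul_smul, mul_comm]
    have hkey : ⟪S x, x⟫ = ∑ i, Real.sqrt (μ i) * (b.repr x i * b.repr x i) := by
      rw [hSx, sum_inner]
      refine Finset.sum_congr rfl fun i _ => ?_
      rw [real_inner_smul_left, ← hrepr, mul_assoc]
    rw [hkey]
    have hne : ∃ i, b.repr x i ≠ 0 := by
      by_contra hcon
      push_neg at hcon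
      apply hx
      rw [← b.sum_repr x]
      simp [hcon]
    obtain ⟨i, hi⟩ := hne
    refine Finset.sum_pos' (fun j _ => ?_) ⟨i, Finset.mem_univ i, ?_⟩
    · exact mul_nonneg (Real.sqrt_nonneg _) (mul_self_nonneg _)
    · exact mul_pos (Real.sqrt_pos.mpr (hμpos i)) (mul_self_pos.mpr hi)
  · -- J² = -1
    apply LinearMap.ext
    intro x
    simp only [LinearMap.comp_apply, LinearMap.neg_apply, LinearMap.id_apply]
    rw [hJapp, hJapp, hASi]
    have hAA : A (A x) = -T x := by rw [hTapp, neg_neg]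
    rw [hAA, map_neg, map_neg]
    apply hSinj
    apply hSinj
    rw [map_neg, map_neg, hSSi, hSSi, ← hSS x, map_neg, map_neg]
  · intro x y
    rw [hgapp, hJapp, hSSi, hA]
  · intro x y
    have hAA : ∀ z : E, A (A z) = -T z := fun z => by rw [hTapp, neg_neg]
    rw [hgapp, hgapp, hJapp, hJapp, hSSi, ← hSiSymm, ← hASi, hskew, hAA, inner_neg_right,
      neg_neg, ← hSS y, ← hSsymm, hSSi, ← hSsymm]
  · intro x y
    rw [hgapp, hgapp, ← hcomm P hPT, hgsym]
  · apply LinearMap.ext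
    intro x
    simp only [LinearMap.comp_apply]
    rw [hJapp, hJapp, hPSi, hPA]
end

section
/- Fix n ∈ ℕ and let 𝒥 denote the standard symplectic 2n×2n matrix, in block form 𝒥 = [[0, 1ₙ], [−1ₙ, 0]]. Let H : ℝ^{2n} → ℝ be differentiable, and let P : ℝ^{2n} → Mat(2n×2n, ℝ) assign to each point x a matrix satisfying P(x)·P(x) = P(x) (idempotent) and P(x)·𝒥 = 𝒥·P(x)ᵀ (ω₀-orthogonality). If x : ℝ → ℝ^{2n} is differentiable and satisfies the constrained Hamiltonian equations of motion x'(t) = P(x(t)) · 𝒥 · ∇H(x(t)) for all t, where ∇H denotes the gradient of H, then t ↦ H(x(t)) is constant; i.e., the energy H is an integral of motion of the constrained Hamiltonian system. -/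
open Matrix

/-- Energy conservation for the constrained Hamiltonian system in
local Darboux coordinates. With `𝒥 = [[0, 1ₙ], [−1ₙ, 0]]` the standard
symplectic matrix, `H` differentiable with gradient `gradH`, and `P` a field of
idempotent ω₀-orthogonal (i.e. `P 𝒥 = 𝒥 Pᵀ`) matrices, any solution of
`x' = P(x) 𝒥 ∇H(x)` conserves `H`. -/
theorem stmt_2 (n : ℕ)
    (H : ((Fin n ⊕ Fin n) → ℝ) → ℝ)
    (gradH : ((Fin n ⊕ Fin n) → ℝ) → ((Fin n ⊕ Fin n) → ℝ))
    (hHdiff : Differentiable ℝ H)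
    (hgrad : ∀ y w, fderiv ℝ H y w = gradH y ⬝ᵥ w)
    (P : ((Fin n ⊕ Fin n) → ℝ) → Matrix (Fin n ⊕ Fin n) (Fin n ⊕ Fin n) ℝ)
    (hPidem : ∀ y, P y * P y = P y)
    (hPorth : ∀ y, P y * (Matrix.fromBlocks 0 1 (-1) 0 : Matrix (Fin n ⊕ Fin n) (Fin n ⊕ Fin n) ℝ)
      = (Matrix.fromBlocks 0 1 (-1) 0 : Matrix (Fin n ⊕ Fin n) (Fin n ⊕ Fin n) ℝ) * (P y)ᵀ)
    (x : ℝ → ((Fin n ⊕ Fin n) → ℝ))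
    (hx : ∀ t : ℝ, HasDerivAt x
      (P (x t) *ᵥ ((Matrix.fromBlocks 0 1 (-1) 0 : Matrix (Fin n ⊕ Fin n) (Fin n ⊕ Fin n) ℝ)
        *ᵥ gradH (x t))) t) :
    ∀ t s : ℝ, H (x t) = H (x s) := by

  set J : Matrix (Fin n ⊕ Fin n) (Fin n ⊕ Fin n) ℝ := Matrix.fromBlocks 0 1 (-1) 0 with hJ
  have hJskew : Jᵀ = -J := by
    rw [hJ, Matrix.fromBlocks_transpose]
    simp [Matrix.fromBlocks_neg]
  have key : ∀ y, gradH y ⬝ᵥ (P y *ᵥ (J *ᵥ gradH y)) = 0 := by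
    intro y
    have h1 : P y * J = P y * J * (P y)ᵀ := by
      calc P y * J = P y * P y * J := by rw [hPidem]
        _ = P y * (P y * J) := by rw [mul_assoc]
        _ = P y * (J * (P y)ᵀ) := by rw [hPorth]
        _ = P y * J * (P y)ᵀ := by rw [mul_assoc]
    set g := gradH y
    set w := (P y)ᵀ *ᵥ g with hw
    have h2 : P y *ᵥ (J *ᵥ g) = P y *ᵥ (J *ᵥ w) := by
      rw [Matrix.mulVec_mulVec, Matrix.mulVec_mulVec, Matrix.mulVec_mulVec, ← h1]
    have h3 : g ⬝ᵥ (P y *ᵥ (J *ᵥ w)) = w ⬝ᵥ (J *ᵥ w) := by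
      rw [Matrix.dotProduct_mulVec, ← Matrix.mulVec_transpose, hw]
    have h4 : w ⬝ᵥ (J *ᵥ w) = 0 := by
      have h5 : w ⬝ᵥ (J *ᵥ w) = -(w ⬝ᵥ (J *ᵥ w)) := by
        calc w ⬝ᵥ (J *ᵥ w) = (Jᵀ *ᵥ w) ⬝ᵥ w := by
              rw [Matrix.mulVec_transpose, ← Matrix.dotProduct_mulVec]
          _ = -((J *ᵥ w) ⬝ᵥ w) := by rw [hJskew, Matrix.neg_mulVec, neg_dotProduct]
          _ = -(w ⬝ᵥ (J *ᵥ w)) := by rw [dotProduct_comm]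
      linarith
    rw [h2, h3, h4]
  have hderiv : ∀ t : ℝ, HasDerivAt (fun t => H (x t)) 0 t := by
    intro t
    have := ((hHdiff (x t)).hasFDerivAt).comp_hasDerivAt t (hx t)
    have h0 : fderiv ℝ H (x t) (P (x t) *ᵥ (J *ᵥ gradH (x t))) = 0 := by
      rw [hgrad]; exact key (x t)
    rwa [h0] at this
  intro t s
  exact is_const_of_deriv_eq_zero (fun u => (hderiv u).differentiableAt)
    (fun u => (hderiv u).deriv) t s
end

section
/- Let E be a finite-dimensional real inner product space and let P, Q : E → E be orthogonal projections. Assume that Q∘P∘Q is invertible on the range of Q and that P∘Q∘P is invertible on the range of P. Then the operator P − Q has no real eigenvalue κ with κ ≥ 1; that is, the spectrum of P − Q has empty intersection with the interval [1, ∞). -/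
open RealInnerProductSpace

/-- For orthogonal projections `P, Q` on a finite-dimensional real
inner product space such that `Q∘P∘Q` is invertible on the range of `Q` and
`P∘Q∘P` is invertible on the range of `P`, the operator `P − Q` has no
eigenvalue `κ ≥ 1`. -/
theorem stmt_4 {E : Type*} [NormedAddCommGroup E] [InnerProductSpace ℝ E]
    [FiniteDimensional ℝ E]
    (P Q : E →ₗ[ℝ] E)
    (hPidem : P ∘ₗ P = P) (hQidem : Q ∘ₗ Q = Q)
    (hPsa : ∀ x y : E, ⟪P x, y⟫ = ⟪x, P y⟫)
    (hQsa : ∀ x y : E, ⟪Q x, y⟫ = ⟪x, Q y⟫)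
    (hQPQ : ∀ v : E, Q v = v → Q (P v) = 0 → v = 0)
    (hPQP : ∀ v : E, P v = v → P (Q v) = 0 → v = 0) :
    ∀ κ : ℝ, 1 ≤ κ → ∀ v : E, P v - Q v = κ • v → v = 0 := by
  intro κ hκ v hv
  have hPP : P (P v) = P v := LinearMap.congr_fun hPidem v
  have hQQ : Q (Q v) = Q v := LinearMap.congr_fun hQidem v
  -- key inner product identities
  have haP : ⟪P v, P v⟫ = ⟪P v, v⟫ := by
    calc ⟪P v, P v⟫ = ⟪v, P (P v)⟫ := hPsa v (P v)
    _ = ⟪v, P v⟫ := by rw [hPP]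
    _ = ⟪P v, v⟫ := (real_inner_comm _ _)
  have haQ : ⟪Q v, Q v⟫ = ⟪Q v, v⟫ := by
    calc ⟪Q v, Q v⟫ = ⟪v, Q (Q v)⟫ := hQsa v (Q v)
    _ = ⟪v, Q v⟫ := by rw [hQQ]
    _ = ⟪Q v, v⟫ := (real_inner_comm _ _)
  set a : ℝ := ⟪P v, v⟫ with ha
  set b : ℝ := ⟪Q v, v⟫ with hb
  set n : ℝ := ⟪v, v⟫ with hn
  have heig : a - b = κ * n := by
    have := congrArg (fun w => ⟪w, v⟫) hv
    simpa only [inner_sub_left, real_inner_smul_left] using this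
  have hb0 : 0 ≤ b := by
    have := real_inner_self_nonneg (x := Q v)
    linarith [haQ]
  have hexp : ⟪v - P v, v - P v⟫ = n - a := by
    rw [inner_sub_left, inner_sub_right, inner_sub_right, haP]
    have : ⟪v, P v⟫ = a := (real_inner_comm v (P v)).symm
    rw [this]; ring
  have han : a ≤ n := by
    have := real_inner_self_nonneg (x := v - P v)
    rw [hexp] at this; linarith
  have hn0 : 0 ≤ n := real_inner_self_nonneg
  rcases eq_or_lt_of_le hn0 with hzero | hpos
  · exact inner_self_eq_zero.mp hzero.symm
  · -- n > 0 forces κ = 1, b = 0, a = n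
    have hκ1 : κ = 1 := by nlinarith
    have hbz : b = 0 := by nlinarith
    have han' : a = n := by nlinarith
    have hQv : Q v = 0 := by
      have : ⟪Q v, Q v⟫ = 0 := by rw [haQ]; exact hbz
      exact inner_self_eq_zero.mp this
    have hPv : P v = v := by
      have : ⟪v - P v, v - P v⟫ = 0 := by rw [hexp, han']; ring
      have := inner_self_eq_zero.mp this
      have : v - P v = 0 := this
      linear_combination (norm := abel) -this
    exact hPQP v hPv (by rw [hQv, map_zero])
end

section
/- Let E be a finite-dimensional real inner product space and let P, Q : E → E be orthogonal projections. Assume that Q∘P∘Q is invertible on the range of Q and that P∘Q∘P is invertible on the range of P. Then for every s ∈ [0, 1], the linear map id + (1 − s)(P − Q) : E → E is bijective (invertible). -/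
open RealInnerProductSpace

/-- For orthogonal projections `P, Q` on a finite-dimensional real
inner product space such that `Q∘P∘Q` is invertible on the range of `Q` and
`P∘Q∘P` is invertible on the range of `P`, the map `id + (1 − s)(P − Q)` is
bijective for every `s ∈ [0, 1]`. -/
theorem stmt_5 {E : Type*} [NormedAddCommGroup E] [InnerProductSpace ℝ E]
    [FiniteDimensional ℝ E]
    (P Q : E →ₗ[ℝ] E)
    (hPidem : P ∘ₗ P = P) (hQidem : Q ∘ₗ Q = Q)
    (hPsa : ∀ x y : E, ⟪P x, y⟫ = ⟪x, P y⟫)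
    (hQsa : ∀ x y : E, ⟪Q x, y⟫ = ⟪x, Q y⟫)
    (hQPQ : ∀ v : E, Q v = v → Q (P v) = 0 → v = 0)
    (hPQP : ∀ v : E, P v = v → P (Q v) = 0 → v = 0) :
    ∀ s : ℝ, s ∈ Set.Icc (0:ℝ) 1 →
      Function.Bijective ⇑(LinearMap.id + (1 - s) • (P - Q) : E →ₗ[ℝ] E) := by
  have hPP : ∀ x : E, P (P x) = P x := fun x => by
    have := LinearMap.congr_fun hPidem x; simpa using this
  have hQQ : ∀ x : E, Q (Q x) = Q x := fun x => by
    have := LinearMap.congr_fun hQidem x; simpa using this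
  have hPnorm : ∀ x : E, ⟪x, P x⟫ = ‖P x‖ ^ 2 := fun x => by
    have h := hPsa x (P x)
    rw [hPP] at h
    rw [← h, real_inner_self_eq_norm_sq]
  have hQnorm : ∀ x : E, ⟪x, Q x⟫ = ‖Q x‖ ^ 2 := fun x => by
    have h := hQsa x (Q x)
    rw [hQQ] at h
    rw [← h, real_inner_self_eq_norm_sq]
  have hQle : ∀ x : E, ‖Q x‖ ≤ ‖x‖ := fun x => by
    have h1 : ‖Q x‖ ^ 2 ≤ ‖x‖ * ‖Q x‖ := by
      rw [← hQnorm x]; exact real_inner_le_norm x (Q x)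
    nlinarith [norm_nonneg (Q x), norm_nonneg x]
  intro s hs
  obtain ⟨hs0, hs1⟩ := hs
  set t : ℝ := 1 - s with ht
  have ht0 : 0 ≤ t := by simp [ht]; linarith
  have ht1 : t ≤ 1 := by simp [ht]; linarith
  have hinj : Function.Injective ⇑(LinearMap.id + t • (P - Q) : E →ₗ[ℝ] E) := by
    rw [← LinearMap.ker_eq_bot, LinearMap.ker_eq_bot']
    intro x hx
    simp only [LinearMap.add_apply, LinearMap.smul_apply, LinearMap.sub_apply,
      LinearMap.id_apply] at hx
    by_cases hteq : t = 1
    · rw [hteq, one_smul] at hx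
      have hxeq : x = Q x - P x := by
        have := hx; abel_nf at this ⊢; linear_combination (norm := abel_nf) this
      have hQP0 : Q (P x) = 0 := by
        have h := congrArg Q hxeq
        rw [map_sub, hQQ] at h
        exact sub_eq_self.mp h.symm
      have hP0 : P x = 0 := hPQP (P x) (hPP x) (by rw [hQP0, map_zero])
      have hQx : Q x = x := by rw [hxeq, hP0, sub_zero, hQQ]
      exact hQPQ x hQx (by rw [hP0, map_zero])
    · have htlt : t < 1 := lt_of_le_of_ne ht1 hteq
      have h0 : ⟪x, x + t • (P x - Q x)⟫ = 0 := by rw [hx, inner_zero_right]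
      rw [inner_add_right, real_inner_smul_right, inner_sub_right, hPnorm, hQnorm,
        real_inner_self_eq_norm_sq] at h0
      have hQx := hQle x
      have hQ2 : ‖Q x‖ ^ 2 ≤ ‖x‖ ^ 2 := by nlinarith [norm_nonneg (Q x), norm_nonneg x]
      have h2 : ‖x‖ ^ 2 ≤ 0 := by
        nlinarith [mul_nonneg ht0 (sub_nonneg.mpr hQ2), mul_nonneg ht0 (sq_nonneg ‖P x‖),
          sq_nonneg ‖x‖]
      have hx0 : ‖x‖ ^ 2 = 0 := le_antisymm h2 (sq_nonneg _)
      have : ‖x‖ = 0 := by nlinarith [norm_nonneg x]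
      exact norm_eq_zero.mp this
  exact ⟨hinj, LinearMap.injective_iff_surjective.mp hinj⟩
end

section
/- Let E be a finite-dimensional real inner product space and let P, Q : E → E be orthogonal projections. Assume that Q∘P∘Q is invertible on the range of Q and that P∘Q∘P is invertible on the range of P. Then the range of (id − P) ∘ (id − Q) equals the range of id − P; equivalently, the projection id − P maps the kernel of Q surjectively onto the range of id − P. -/
open RealInnerProductSpace

lemma aux_range_id_sub {E : Type*} [NormedAddCommGroup E] [InnerProductSpace ℝ E]
    (R : E →ₗ[ℝ] E) (h : R ∘ₗ R = R) :
    LinearMap.range (LinearMap.id - R) = LinearMap.ker R := by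
  ext x
  simp only [LinearMap.mem_range, LinearMap.mem_ker]
  constructor
  · rintro ⟨y, rfl⟩
    have := LinearMap.congr_fun h y
    simp only [LinearMap.comp_apply] at this
    simp [this]
  · intro hx
    exact ⟨x, by simp [hx]⟩

lemma aux_dim_le {E : Type*} [NormedAddCommGroup E] [InnerProductSpace ℝ E]
    [FiniteDimensional ℝ E]
    (P Q : E →ₗ[ℝ] E)
    (hdisj : ∀ v : E, v ∈ LinearMap.range Q → v ∈ LinearMap.ker P → v = 0) :
    Module.finrank ℝ (LinearMap.ker P) ≤ Module.finrank ℝ (LinearMap.ker Q) := by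
  have hd : Disjoint (LinearMap.range Q) (LinearMap.ker P) := by
    rw [Submodule.disjoint_def]
    intro x hx hx'
    exact hdisj x hx hx'
  have h1 := Submodule.finrank_sup_add_finrank_inf_eq (LinearMap.range Q) (LinearMap.ker P)
  rw [hd.eq_bot] at h1
  simp only [finrank_bot, add_zero] at h1
  have h2 : Module.finrank ℝ (LinearMap.range Q) + Module.finrank ℝ (LinearMap.ker P)
      ≤ Module.finrank ℝ E := by
    rw [← h1]; exact Submodule.finrank_le _
  have h3 := LinearMap.finrank_range_add_finrank_ker Q
  omega

/-- For orthogonal projections `P, Q` on a finite-dimensional real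
inner product space such that `Q∘P∘Q` is invertible on the range of `Q` and
`P∘Q∘P` is invertible on the range of `P`, the range of `(id − P)∘(id − Q)`
equals the range of `id − P`; i.e. `id − P` maps the kernel of `Q` onto the
range of `id − P`. -/
theorem stmt_6 {E : Type*} [NormedAddCommGroup E] [InnerProductSpace ℝ E]
    [FiniteDimensional ℝ E]
    (P Q : E →ₗ[ℝ] E)
    (hPidem : P ∘ₗ P = P) (hQidem : Q ∘ₗ Q = Q)
    (hPsa : ∀ x y : E, ⟪P x, y⟫ = ⟪x, P y⟫)
    (hQsa : ∀ x y : E, ⟪Q x, y⟫ = ⟪x, Q y⟫)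
    (hQPQ : ∀ v : E, Q v = v → Q (P v) = 0 → v = 0)
    (hPQP : ∀ v : E, P v = v → P (Q v) = 0 → v = 0) :
    LinearMap.range ((LinearMap.id - P) ∘ₗ (LinearMap.id - Q))
      = LinearMap.range (LinearMap.id - P) := by
  -- range Q ∩ ker P = 0
  have hdisjQP : ∀ v : E, v ∈ LinearMap.range Q → v ∈ LinearMap.ker P → v = 0 := by
    rintro v ⟨w, rfl⟩ hv
    rw [LinearMap.mem_ker] at hv
    have hQv : Q (Q w) = Q w := LinearMap.congr_fun hQidem w
    exact hQPQ (Q w) hQv (by rw [hv, map_zero])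
  have hdisjPQ : ∀ v : E, v ∈ LinearMap.range P → v ∈ LinearMap.ker Q → v = 0 := by
    rintro v ⟨w, rfl⟩ hv
    rw [LinearMap.mem_ker] at hv
    have hPv : P (P w) = P w := LinearMap.congr_fun hPidem w
    exact hPQP (P w) hPv (by rw [hv, map_zero])
  have hdim : Module.finrank ℝ (LinearMap.ker P) = Module.finrank ℝ (LinearMap.ker Q) :=
    le_antisymm (aux_dim_le P Q hdisjQP) (aux_dim_le Q P hdisjPQ)
  rw [LinearMap.range_comp, aux_range_id_sub Q hQidem, aux_range_id_sub P hPidem]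
  -- injectivity of (id - P) on ker Q
  set f : E →ₗ[ℝ] E := LinearMap.id - P with hf
  have hinj : Function.Injective (f ∘ₗ (LinearMap.ker Q).subtype) := by
    rw [← LinearMap.ker_eq_bot, LinearMap.ker_eq_bot']
    intro m hm
    have hm' : f m.1 = 0 := hm
    have hPm : P (m : E) = m := by
      have : (m : E) - P m = 0 := by simpa [hf] using hm'
      have := sub_eq_zero.mp this
      exact this.symm
    have : (m : E) = 0 := hdisjPQ m ⟨m, hPm⟩ m.2
    exact Subtype.ext this
  have hrange : LinearMap.range (f ∘ₗ (LinearMap.ker Q).subtype)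
      = Submodule.map f (LinearMap.ker Q) := by
    rw [LinearMap.range_comp, Submodule.range_subtype]
  have hle : Submodule.map f (LinearMap.ker Q) ≤ LinearMap.ker P := by
    rintro x ⟨y, hy, rfl⟩
    have := LinearMap.congr_fun hPidem y
    simp only [LinearMap.comp_apply] at this
    simp [hf, this]
  have hfr : Module.finrank ℝ (Submodule.map f (LinearMap.ker Q))
      = Module.finrank ℝ (LinearMap.ker Q) := by
    rw [← hrange]
    exact LinearMap.finrank_range_of_inj hinj
  exact Submodule.eq_of_le_of_finrank_le hle (by rw [hfr, hdim])
end

section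
/- Let n, m ∈ ℕ, let M be a real symmetric positive-definite n×n matrix, let E be a real n×m matrix with Eᵀ M⁻¹ E = 1ₘ, let F be an arbitrary real n×m matrix, and set 𝔭 := 1ₙ − M⁻¹ E Eᵀ and T := E Fᵀ 𝔭 − 𝔭ᵀ F Eᵀ. Let 𝒥 := [[0, 1ₙ], [−1ₙ, 0]] be the standard symplectic 2n×2n matrix, and let P be the 2n×2n block matrix P := [[𝔭, 0], [−T, 𝔭ᵀ]]. Then: (a) T is antisymmetric, Tᵀ = −T; (b) P is idempotent, P·P = P; and (c) P·𝒥 = 𝒥·Pᵀ (P is ω₀-orthogonal with respect to the canonical symplectic structure). -/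
open Matrix

/-- With `𝔭 = 1 − M⁻¹EEᵀ`, `T = EFᵀ𝔭 − 𝔭ᵀFEᵀ`,
`𝒥 = [[0,1],[−1,0]]`, and `P = [[𝔭, 0], [−T, 𝔭ᵀ]]`, one has `Tᵀ = −T`,
`P P = P`, and `P 𝒥 = 𝒥 Pᵀ` (ω₀-orthogonality of the projector `π_V`). -/
theorem stmt_10 (n m : ℕ)
    (M : Matrix (Fin n) (Fin n) ℝ) (hMsym : M.IsSymm) (hMpos : M.PosDef)
    (E : Matrix (Fin n) (Fin m) ℝ)
    (hE : Eᵀ * M⁻¹ * E = 1)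
    (F : Matrix (Fin n) (Fin m) ℝ)
    (𝔭 : Matrix (Fin n) (Fin n) ℝ) (h𝔭 : 𝔭 = 1 - M⁻¹ * E * Eᵀ)
    (T : Matrix (Fin n) (Fin n) ℝ) (hT : T = E * Fᵀ * 𝔭 - 𝔭ᵀ * F * Eᵀ)
    (𝒥 : Matrix (Fin n ⊕ Fin n) (Fin n ⊕ Fin n) ℝ)
    (h𝒥 : 𝒥 = Matrix.fromBlocks 0 1 (-1) 0)
    (P : Matrix (Fin n ⊕ Fin n) (Fin n ⊕ Fin n) ℝ)
    (hP : P = Matrix.fromBlocks 𝔭 0 (-T) 𝔭ᵀ) :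
    Tᵀ = -T ∧ P * P = P ∧ P * 𝒥 = 𝒥 * Pᵀ := by
  -- Eᵀ annihilates 𝔭
  have hEp : Eᵀ * 𝔭 = 0 := by
    rw [h𝔭, Matrix.mul_sub, Matrix.mul_one, ← Matrix.mul_assoc, ← Matrix.mul_assoc,
      hE, Matrix.one_mul, sub_self]
  have hpE : 𝔭ᵀ * E = 0 := by
    have := congrArg Matrix.transpose hEp
    simpa [Matrix.transpose_mul] using this
  -- 𝔭 is idempotent
  have hA : (M⁻¹ * E * Eᵀ) * (M⁻¹ * E * Eᵀ) = M⁻¹ * E * Eᵀ := by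
    calc (M⁻¹ * E * Eᵀ) * (M⁻¹ * E * Eᵀ)
        = M⁻¹ * E * (Eᵀ * M⁻¹ * E) * Eᵀ := by
          simp only [Matrix.mul_assoc]
      _ = M⁻¹ * E * Eᵀ := by rw [hE]; simp [Matrix.mul_assoc]
  have hpp : 𝔭 * 𝔭 = 𝔭 := by
    rw [h𝔭, sub_mul, one_mul, mul_sub, mul_one, hA]
    simp
  have hppT : 𝔭ᵀ * 𝔭ᵀ = 𝔭ᵀ := by
    have := congrArg Matrix.transpose hpp
    simpa [Matrix.transpose_mul] using this
  -- (a) antisymmetry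
  have hTt : Tᵀ = -T := by
    rw [hT]
    simp [Matrix.transpose_sub, Matrix.transpose_mul, Matrix.mul_assoc, neg_sub]
  -- key identity for idempotence of P
  have hkey : T * 𝔭 + 𝔭ᵀ * T = T := by
    have h1 : T * 𝔭 = E * Fᵀ * 𝔭 := by
      rw [hT, sub_mul]
      rw [Matrix.mul_assoc (E * Fᵀ) 𝔭 𝔭, hpp]
      rw [Matrix.mul_assoc (𝔭ᵀ * F) Eᵀ 𝔭, hEp]
      simp
    have h2 : 𝔭ᵀ * T = -(𝔭ᵀ * F * Eᵀ) := by
      rw [hT, mul_sub]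
      rw [show 𝔭ᵀ * (E * Fᵀ * 𝔭) = 𝔭ᵀ * E * (Fᵀ * 𝔭) by simp [Matrix.mul_assoc], hpE]
      rw [show 𝔭ᵀ * (𝔭ᵀ * F * Eᵀ) = 𝔭ᵀ * 𝔭ᵀ * F * Eᵀ by simp [Matrix.mul_assoc], hppT]
      simp
    rw [h1, h2, hT]
    abel
  refine ⟨hTt, ?_, ?_⟩
  · have h3 : -T * 𝔭 + 𝔭ᵀ * -T = -T := by
      rw [show -T * 𝔭 + 𝔭ᵀ * -T = -(T * 𝔭 + 𝔭ᵀ * T) by noncomm_ring, hkey]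
    rw [hP, Matrix.fromBlocks_multiply]
    simp only [Matrix.mul_zero, Matrix.zero_mul, add_zero, zero_add, hpp, hppT, h3]
  · rw [hP, h𝒥, Matrix.fromBlocks_transpose, Matrix.fromBlocks_multiply,
      Matrix.fromBlocks_multiply]
    simp [hTt]
end

section
/- Let n, m ∈ ℕ, let M be a real symmetric positive-definite n×n matrix, let E be a real n×m matrix with Eᵀ M⁻¹ E = 1ₘ, and let F be an arbitrary real n×m matrix. Let 𝒥 := [[0, 1ₙ], [−1ₙ, 0]] and let K be the 2m×2n block matrix K := [[Eᵀ, 0], [Fᵀ, Eᵀ M⁻¹]]. Then K 𝒥 Kᵀ = [[0, 1ₘ], [−1ₘ, S]] where S := Fᵀ M⁻¹ E − Eᵀ M⁻¹ F, and this 2m×2m matrix is invertible, with inverse [[S, −1ₘ], [1ₘ, 0]]. (In particular, the distribution V annihilated by the 2m rows of K is symplectic.) -/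
open Matrix

/-- With `K = [[Eᵀ, 0], [Fᵀ, EᵀM⁻¹]]` and `𝒥 = [[0,1],[−1,0]]`,
one has `K 𝒥 Kᵀ = [[0, 1ₘ], [−1ₘ, S]]` where `S = FᵀM⁻¹E − EᵀM⁻¹F`, and this
matrix is invertible with inverse `[[S, −1ₘ], [1ₘ, 0]]` (so the distribution
annihilated by the rows of `K` is symplectic). -/
theorem stmt_11 (n m : ℕ)
    (M : Matrix (Fin n) (Fin n) ℝ) (hMsym : M.IsSymm) (hMpos : M.PosDef)
    (E : Matrix (Fin n) (Fin m) ℝ)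
    (hE : Eᵀ * M⁻¹ * E = 1)
    (F : Matrix (Fin n) (Fin m) ℝ)
    (𝒥 : Matrix (Fin n ⊕ Fin n) (Fin n ⊕ Fin n) ℝ)
    (h𝒥 : 𝒥 = Matrix.fromBlocks 0 1 (-1) 0)
    (K : Matrix (Fin m ⊕ Fin m) (Fin n ⊕ Fin n) ℝ)
    (hK : K = Matrix.fromBlocks Eᵀ 0 Fᵀ (Eᵀ * M⁻¹))
    (S : Matrix (Fin m) (Fin m) ℝ)
    (hS : S = Fᵀ * M⁻¹ * E - Eᵀ * M⁻¹ * F) :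
    K * 𝒥 * Kᵀ = Matrix.fromBlocks 0 1 (-1) S ∧
    (Matrix.fromBlocks 0 1 (-1) S : Matrix (Fin m ⊕ Fin m) (Fin m ⊕ Fin m) ℝ) *
      Matrix.fromBlocks S (-1) 1 0 = 1 ∧
    (Matrix.fromBlocks S (-1) 1 0 : Matrix (Fin m ⊕ Fin m) (Fin m ⊕ Fin m) ℝ) *
      Matrix.fromBlocks 0 1 (-1) S = 1 := by
  have hMinv : M⁻¹ᵀ = M⁻¹ := by
    rw [Matrix.transpose_nonsing_inv, hMsym.eq]
  have hE' : Eᵀ * M⁻¹ * E = (1 : Matrix (Fin m) (Fin m) ℝ) := hE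
  have hE2 : (Eᵀ * M⁻¹)ᵀ = M⁻¹ * E := by
    rw [Matrix.transpose_mul, hMinv, Matrix.transpose_transpose]
  refine ⟨?_, ?_, ?_⟩
  · subst h𝒥 hK hS
    rw [Matrix.fromBlocks_transpose, hE2, Matrix.fromBlocks_multiply,
      Matrix.fromBlocks_multiply]
    congr 1 <;> simp [Matrix.mul_assoc, ← hE'] <;> abel
  · rw [Matrix.fromBlocks_multiply]
    simp [← Matrix.fromBlocks_one]
  · rw [Matrix.fromBlocks_multiply]
    simp [← Matrix.fromBlocks_one]
end

section
/- Let n, m ∈ ℕ. Let M : ℝⁿ → Mat(n×n, ℝ) be a C¹ map taking values in symmetric positive-definite matrices, E : ℝⁿ → Mat(n×m, ℝ) a C¹ map with E(q)ᵀ M(q)⁻¹ E(q) = 1ₘ for all q, and U : ℝⁿ → ℝ a C¹ function. Define 𝔭(q) := 1ₙ − M(q)⁻¹ E(q) E(q)ᵀ, H(q,p) := ½ pᵀ M(q)⁻¹ p + U(q), f(q,p) := E(q)ᵀ M(q)⁻¹ p ∈ ℝᵐ, F(q,p) := the n×m matrix with entries F(q,p)_{jK} = ∂ f_K(q,p)/∂q^j,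 and T(q,p) := E(q) F(q,p)ᵀ 𝔭(q) − 𝔭(q)ᵀ F(q,p) E(q)ᵀ. If (q, p) : ℝ → ℝⁿ × ℝⁿ is differentiable and satisfies q̇(t) = 𝔭(q(t)) M(q(t))⁻¹ p(t) and ṗ(t) = −𝔭(q(t))ᵀ ∂_q H(q(t), p(t)) − T(q(t), p(t)) M(q(t))⁻¹ p(t) for all t, then t ↦ f(q(t), p(t)) is constant. In particular, every level set {(q,p) : f(q,p) = μ} — and hence the physical leaf M_phys = {(q,p) : f(q,p) = 0} — is invariant under the flow of the auxiliary constrained Hamiltonian system. -/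
open Matrix

/-- Along any solution of the auxiliary constrained Hamiltonian
system `q̇ = 𝔭(q) M(q)⁻¹ p`, `ṗ = −𝔭(q)ᵀ ∂_q H − T(q,p) M(q)⁻¹ p`, the
constraint functions `f(q,p) = E(q)ᵀ M(q)⁻¹ p` are constant in time; in
particular every level set of `f`, and hence the physical leaf
`M_phys = {f = 0}`, is invariant under the flow. -/
theorem stmt_12 (n m : ℕ)
    (M : (Fin n → ℝ) → Matrix (Fin n) (Fin n) ℝ)
    (E : (Fin n → ℝ) → Matrix (Fin n) (Fin m) ℝ)
    (U : (Fin n → ℝ) → ℝ)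
    (hMsym : ∀ q, (M q).IsSymm) (hMpos : ∀ q, (M q).PosDef)
    (hMdiff : ∀ i j, Differentiable ℝ (fun q => M q i j))
    (hEdiff : ∀ i j, Differentiable ℝ (fun q => E q i j))
    (hUdiff : Differentiable ℝ U)
    (hEortho : ∀ q, (E q)ᵀ * (M q)⁻¹ * E q = 1)
    (𝔭 : (Fin n → ℝ) → Matrix (Fin n) (Fin n) ℝ)
    (h𝔭 : ∀ q, 𝔭 q = 1 - (M q)⁻¹ * E q * (E q)ᵀ)
    (H : (Fin n → ℝ) → (Fin n → ℝ) → ℝ)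
    (hH : ∀ q p, H q p = (1/2) * (p ⬝ᵥ ((M q)⁻¹ *ᵥ p)) + U q)
    (f : (Fin n → ℝ) → (Fin n → ℝ) → (Fin m → ℝ))
    (hf : ∀ q p, f q p = (E q)ᵀ *ᵥ ((M q)⁻¹ *ᵥ p))
    (F : (Fin n → ℝ) → (Fin n → ℝ) → Matrix (Fin n) (Fin m) ℝ)
    (hfdiff : ∀ p K, Differentiable ℝ (fun q => f q p K))
    (hF : ∀ q p (K : Fin m) (w : Fin n → ℝ),
      fderiv ℝ (fun q' => f q' p K) q w = (fun j => F q p j K) ⬝ᵥ w)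
    (T : (Fin n → ℝ) → (Fin n → ℝ) → Matrix (Fin n) (Fin n) ℝ)
    (hT : ∀ q p, T q p = E q * (F q p)ᵀ * 𝔭 q - (𝔭 q)ᵀ * F q p * (E q)ᵀ)
    (gradqH : (Fin n → ℝ) → (Fin n → ℝ) → (Fin n → ℝ))
    (hHqdiff : ∀ p, Differentiable ℝ (fun q => H q p))
    (hgradqH : ∀ q p (w : Fin n → ℝ),
      fderiv ℝ (fun q' => H q' p) q w = gradqH q p ⬝ᵥ w)
    (q p : ℝ → (Fin n → ℝ))
    (hq : ∀ t : ℝ, HasDerivAt q (𝔭 (q t) *ᵥ ((M (q t))⁻¹ *ᵥ p t)) t)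
    (hp : ∀ t : ℝ, HasDerivAt p
      (-((𝔭 (q t))ᵀ *ᵥ gradqH (q t) (p t))
        - T (q t) (p t) *ᵥ ((M (q t))⁻¹ *ᵥ p t)) t) :
    ∀ t s : ℝ, f (q t) (p t) = f (q s) (p s) := by

  -- The inverse metric is symmetric.
  have hMinv : ∀ q₀, ((M q₀)⁻¹)ᵀ = (M q₀)⁻¹ := fun q₀ => by
    rw [Matrix.transpose_nonsing_inv, (hMsym q₀).eq]
  -- Abbreviation: B q = Eᵀ M⁻¹.
  have hBpT : ∀ q₀, ((E q₀)ᵀ * (M q₀)⁻¹) * (𝔭 q₀)ᵀ = 0 := by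
    intro q₀
    have h1 : (𝔭 q₀)ᵀ = 1 - E q₀ * ((E q₀)ᵀ * (M q₀)⁻¹) := by
      rw [h𝔭]
      simp [Matrix.transpose_sub, Matrix.transpose_mul, hMinv, Matrix.mul_assoc]
    rw [h1, Matrix.mul_sub, Matrix.mul_one]
    rw [show (E q₀)ᵀ * (M q₀)⁻¹ * (E q₀ * ((E q₀)ᵀ * (M q₀)⁻¹))
        = ((E q₀)ᵀ * (M q₀)⁻¹ * E q₀) * ((E q₀)ᵀ * (M q₀)⁻¹) by
      simp only [Matrix.mul_assoc]]
    rw [hEortho, Matrix.one_mul, sub_self]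
  have hBT : ∀ q₀ p₀, ((E q₀)ᵀ * (M q₀)⁻¹) * T q₀ p₀ = (F q₀ p₀)ᵀ * 𝔭 q₀ := by
    intro q₀ p₀
    rw [hT, Matrix.mul_sub]
    rw [show (E q₀)ᵀ * (M q₀)⁻¹ * (E q₀ * (F q₀ p₀)ᵀ * 𝔭 q₀)
        = ((E q₀)ᵀ * (M q₀)⁻¹ * E q₀) * ((F q₀ p₀)ᵀ * 𝔭 q₀) by
      simp only [Matrix.mul_assoc]]
    rw [show (E q₀)ᵀ * (M q₀)⁻¹ * ((𝔭 q₀)ᵀ * F q₀ p₀ * (E q₀)ᵀ)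
        = (((E q₀)ᵀ * (M q₀)⁻¹) * (𝔭 q₀)ᵀ) * (F q₀ p₀ * (E q₀)ᵀ) by
      simp only [Matrix.mul_assoc]]
    rw [hEortho, hBpT, Matrix.one_mul, Matrix.zero_mul, sub_zero]
  -- f in matrix form
  have hmul : ∀ q₀ p₀, f q₀ p₀ = ((E q₀)ᵀ * (M q₀)⁻¹) *ᵥ p₀ := by
    intro q₀ p₀; rw [hf, Matrix.mulVec_mulVec]
  have hsingle : ∀ q₀ (j : Fin n) (K : Fin m),
      f q₀ (Pi.single j 1) K = ((E q₀)ᵀ * (M q₀)⁻¹) K j := by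
    intro q₀ j K
    rw [hmul, Matrix.mulVec_single]
    simp
  have hlin : ∀ q₀ p₀ (K : Fin m),
      f q₀ p₀ K = ∑ j, f q₀ (Pi.single j 1) K * p₀ j := by
    intro q₀ p₀ K
    rw [hmul]
    simp only [Matrix.mulVec, dotProduct, hsingle]
  intro t s
  funext K
  -- key: along the flow each component of f has zero derivative
  have key : ∀ τ : ℝ, HasDerivAt (fun t => f (q t) (p t) K) 0 τ := by
    intro τ
    set q₀ := q τ with hq₀
    set p₀ := p τ with hp₀
    set qd : Fin n → ℝ := 𝔭 q₀ *ᵥ ((M q₀)⁻¹ *ᵥ p₀) with hqd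
    set pd : Fin n → ℝ :=
      -((𝔭 q₀)ᵀ *ᵥ gradqH q₀ p₀) - T q₀ p₀ *ᵥ ((M q₀)⁻¹ *ᵥ p₀) with hpd
    have hpj : ∀ j, HasDerivAt (fun t => p t j) (pd j) τ :=
      fun j => hasDerivAt_pi.mp (hp τ) j
    -- derivative of each coefficient function
    have hDa : ∀ j : Fin n, HasDerivAt (fun t => f (q t) (Pi.single j 1) K)
        (fderiv ℝ (fun q' => f q' (Pi.single j 1) K) q₀ qd) τ := by
      intro j
      exact ((hfdiff (Pi.single j 1) K q₀).hasFDerivAt).comp_hasDerivAt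
        τ (hq τ)
    have hsum : HasDerivAt (fun t => ∑ j, f (q t) (Pi.single j 1) K * p t j)
        (∑ j, (fderiv ℝ (fun q' => f q' (Pi.single j 1) K) q₀ qd * p₀ j
          + f q₀ (Pi.single j 1) K * pd j)) τ :=
      HasDerivAt.fun_sum fun j _ => (hDa j).mul (hpj j)
    have heq : (fun t => f (q t) (p t) K)
        = fun t => ∑ j, f (q t) (Pi.single j 1) K * p t j :=
      funext fun t => hlin _ _ _
    rw [heq]
    -- identify the sum of q-derivative terms with the F-term
    have hfd : HasFDerivAt (fun q' => f q' p₀ K)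
        (∑ j, p₀ j • fderiv ℝ (fun q' => f q' (Pi.single j 1) K) q₀) q₀ := by
      have h1 : HasFDerivAt (fun q' => ∑ j, p₀ j * f q' (Pi.single j 1) K)
          (∑ j, p₀ j • fderiv ℝ (fun q' => f q' (Pi.single j 1) K) q₀) q₀ :=
        HasFDerivAt.fun_sum fun j _ =>
          ((hfdiff (Pi.single j 1) K q₀).hasFDerivAt).const_mul (p₀ j)
      have h2 : (fun q' => ∑ j, p₀ j * f q' (Pi.single j 1) K)
          = fun q' => f q' p₀ K := by
        funext q'
        rw [hlin q' p₀ K]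
        exact Finset.sum_congr rfl fun j _ => mul_comm _ _
      rwa [h2] at h1
    have hqterm : ∑ j, p₀ j * fderiv ℝ (fun q' => f q' (Pi.single j 1) K) q₀ qd
        = (fun j => F q₀ p₀ j K) ⬝ᵥ qd := by
      rw [← hF q₀ p₀ K qd, hfd.fderiv]
      simp [ContinuousLinearMap.sum_apply]
    -- assemble and prove the derivative is zero
    have hderiv : (∑ j, (fderiv ℝ (fun q' => f q' (Pi.single j 1) K) q₀ qd * p₀ j
          + f q₀ (Pi.single j 1) K * pd j)) = 0 := by
      rw [Finset.sum_add_distrib]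
      have e1 : ∑ j, fderiv ℝ (fun q' => f q' (Pi.single j 1) K) q₀ qd * p₀ j
          = (fun j => F q₀ p₀ j K) ⬝ᵥ qd := by
        rw [← hqterm]
        exact Finset.sum_congr rfl fun j _ => mul_comm _ _
      have e2 : ∑ j, f q₀ (Pi.single j 1) K * pd j
          = (((E q₀)ᵀ * (M q₀)⁻¹) *ᵥ pd) K := by
        simp only [Matrix.mulVec, dotProduct, hsingle]
      rw [e1, e2]
      -- first term as a transpose mulVec
      have e3 : (fun j => F q₀ p₀ j K) ⬝ᵥ qd
          = (((F q₀ p₀)ᵀ * 𝔭 q₀ * (M q₀)⁻¹) *ᵥ p₀) K := by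
        have e3' : (fun j => F q₀ p₀ j K) ⬝ᵥ qd = ((F q₀ p₀)ᵀ *ᵥ qd) K := rfl
        rw [e3', hqd, Matrix.mulVec_mulVec, Matrix.mulVec_mulVec]
      have e4 : (((E q₀)ᵀ * (M q₀)⁻¹) *ᵥ pd) K
          = -((((F q₀ p₀)ᵀ * 𝔭 q₀ * (M q₀)⁻¹) *ᵥ p₀) K) := by
        rw [hpd, Matrix.mulVec_sub, Matrix.mulVec_neg]
        rw [Matrix.mulVec_mulVec, hBpT, Matrix.zero_mulVec]
        rw [Matrix.mulVec_mulVec, Matrix.mulVec_mulVec, hBT]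
        simp
      rw [e3, e4, add_neg_cancel]
    rw [← hderiv]
    exact hsum
  exact is_const_of_deriv_eq_zero
    (fun τ => (key τ).differentiableAt) (fun τ => (key τ).deriv) t s
end

section
/- Let n, m ∈ ℕ. Let M : ℝⁿ → Mat(n×n, ℝ) be a C¹ map taking values in symmetric positive-definite matrices, E : ℝⁿ → Mat(n×m, ℝ) a C¹ map with E(q)ᵀ M(q)⁻¹ E(q) = 1ₘ for all q, and U : ℝⁿ → ℝ a C¹ function. Define 𝔭(q) := 1ₙ − M(q)⁻¹ E(q) E(q)ᵀ, H(q,p) := ½ pᵀ M(q)⁻¹ p + U(q), f(q,p) := E(q)ᵀ M(q)⁻¹ p, F(q,p) := the n×m matrix with entries F(q,p)_{jK} = ∂ f_K(q,p)/∂q^j, and T(q,p) := E(q) F(q,p)ᵀ 𝔭(q) − 𝔭(q)ᵀ F(q,p) E(q)ᵀ. Then for any point (q, p) ∈ ℝⁿ × ℝⁿ, the right-hand side of the constrained equations of motion vanishes — i.e., 𝔭(q) M(q)⁻¹ p = 0 and 𝔭(q)ᵀ ∂_q H(q,p) + T(q,p) M(q)⁻¹ p = 0 — if and only if 𝔭(q)ᵀ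 p = 0 and 𝔭(q)ᵀ ∇U(q) = 0. Hence the critical set of the auxiliary system is the vector bundle {(q,p) : q ∈ C_Q, p in the annihilator of W at q} over C_Q = {q : 𝔭(q)ᵀ ∇U(q) = 0}. -/
open Matrix

private lemma dp_symm {ι : Type*} [Fintype ι] (A : Matrix ι ι ℝ) (hA : Aᵀ = A)
    (x y : ι → ℝ) : x ⬝ᵥ (A *ᵥ y) = y ⬝ᵥ (A *ᵥ x) := by
  rw [Matrix.dotProduct_mulVec, ← Matrix.mulVec_transpose, hA, dotProduct_comm]

private lemma mulVec_dp {ι κ : Type*} [Fintype ι] [Fintype κ] (A : Matrix ι κ ℝ)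
    (x : κ → ℝ) (y : ι → ℝ) : (A *ᵥ x) ⬝ᵥ y = x ⬝ᵥ (Aᵀ *ᵥ y) := by
  rw [dotProduct_comm, Matrix.dotProduct_mulVec, ← Matrix.mulVec_transpose,
    dotProduct_comm]

/-- The right-hand side of the auxiliary constrained equations of
motion vanishes at `(q, p)` — i.e. `𝔭(q) M(q)⁻¹ p = 0` and
`𝔭(q)ᵀ ∂_q H(q,p) + T(q,p) M(q)⁻¹ p = 0` — if and only if `𝔭(q)ᵀ p = 0` and
`𝔭(q)ᵀ ∇U(q) = 0`. Hence the critical set is the vector bundle over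
`C_Q = {q : 𝔭(q)ᵀ ∇U(q) = 0}` with fibres the annihilator of `W`. -/
theorem stmt_13 (n m : ℕ)
    (M : (Fin n → ℝ) → Matrix (Fin n) (Fin n) ℝ)
    (E : (Fin n → ℝ) → Matrix (Fin n) (Fin m) ℝ)
    (U : (Fin n → ℝ) → ℝ)
    (hMsym : ∀ q, (M q).IsSymm) (hMpos : ∀ q, (M q).PosDef)
    (hMdiff : ∀ i j, Differentiable ℝ (fun q => M q i j))
    (hEdiff : ∀ i j, Differentiable ℝ (fun q => E q i j))
    (hUdiff : Differentiable ℝ U)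
    (hEortho : ∀ q, (E q)ᵀ * (M q)⁻¹ * E q = 1)
    (𝔭 : (Fin n → ℝ) → Matrix (Fin n) (Fin n) ℝ)
    (h𝔭 : ∀ q, 𝔭 q = 1 - (M q)⁻¹ * E q * (E q)ᵀ)
    (H : (Fin n → ℝ) → (Fin n → ℝ) → ℝ)
    (hH : ∀ q p, H q p = (1/2) * (p ⬝ᵥ ((M q)⁻¹ *ᵥ p)) + U q)
    (f : (Fin n → ℝ) → (Fin n → ℝ) → (Fin m → ℝ))
    (hf : ∀ q p, f q p = (E q)ᵀ *ᵥ ((M q)⁻¹ *ᵥ p))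
    (F : (Fin n → ℝ) → (Fin n → ℝ) → Matrix (Fin n) (Fin m) ℝ)
    (hfdiff : ∀ p K, Differentiable ℝ (fun q => f q p K))
    (hF : ∀ q p (K : Fin m) (w : Fin n → ℝ),
      fderiv ℝ (fun q' => f q' p K) q w = (fun j => F q p j K) ⬝ᵥ w)
    (T : (Fin n → ℝ) → (Fin n → ℝ) → Matrix (Fin n) (Fin n) ℝ)
    (hT : ∀ q p, T q p = E q * (F q p)ᵀ * 𝔭 q - (𝔭 q)ᵀ * F q p * (E q)ᵀ)
    (gradqH : (Fin n → ℝ) → (Fin n → ℝ) → (Fin n → ℝ))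
    (hHqdiff : ∀ p, Differentiable ℝ (fun q => H q p))
    (hgradqH : ∀ q p (w : Fin n → ℝ),
      fderiv ℝ (fun q' => H q' p) q w = gradqH q p ⬝ᵥ w)
    (gradU : (Fin n → ℝ) → (Fin n → ℝ))
    (hgradU : ∀ q (w : Fin n → ℝ), fderiv ℝ U q w = gradU q ⬝ᵥ w) :
    ∀ (q p : Fin n → ℝ),
      (𝔭 q *ᵥ ((M q)⁻¹ *ᵥ p) = 0 ∧
        (𝔭 q)ᵀ *ᵥ gradqH q p + T q p *ᵥ ((M q)⁻¹ *ᵥ p) = 0)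
      ↔ ((𝔭 q)ᵀ *ᵥ p = 0 ∧ (𝔭 q)ᵀ *ᵥ gradU q = 0) := by
  -- basic matrix facts
  have hdet : ∀ q, IsUnit (M q).det := fun q => (hMpos q).det_pos.ne'.isUnit
  have hMiT : ∀ q, ((M q)⁻¹)ᵀ = (M q)⁻¹ := by
    intro q
    rw [Matrix.transpose_nonsing_inv, (hMsym q).eq]
  have hPT : ∀ q, (𝔭 q)ᵀ = 1 - E q * (E q)ᵀ * (M q)⁻¹ := by
    intro q
    rw [h𝔭, Matrix.transpose_sub, Matrix.transpose_one, Matrix.transpose_mul,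
      Matrix.transpose_mul, Matrix.transpose_transpose, hMiT, Matrix.mul_assoc]
  have key1 : ∀ q, 𝔭 q * (M q)⁻¹ = (M q)⁻¹ * (𝔭 q)ᵀ := by
    intro q
    rw [hPT q, h𝔭 q]
    simp only [Matrix.sub_mul, Matrix.mul_sub, Matrix.one_mul, Matrix.mul_one,
      Matrix.mul_assoc]
  intro q p
  -- first equation is equivalent to `𝔭ᵀ p = 0`
  have hfirst : 𝔭 q *ᵥ ((M q)⁻¹ *ᵥ p) = 0 ↔ (𝔭 q)ᵀ *ᵥ p = 0 := by
    rw [Matrix.mulVec_mulVec, key1, ← Matrix.mulVec_mulVec]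
    constructor
    · intro h
      have h2 := congrArg (fun v => M q *ᵥ v) h
      simp only [Matrix.mulVec_mulVec, Matrix.mulVec_zero] at h2
      rwa [← Matrix.mul_assoc, Matrix.mul_nonsing_inv _ (hdet q), Matrix.one_mul] at h2
    · intro h; rw [h, Matrix.mulVec_zero]
  -- under `𝔭ᵀ p = 0`, the second equation reduces to `𝔭ᵀ ∇U = 0`
  have key2 : (𝔭 q)ᵀ *ᵥ p = 0 →
      (𝔭 q)ᵀ *ᵥ gradqH q p + T q p *ᵥ ((M q)⁻¹ *ᵥ p) = (𝔭 q)ᵀ *ᵥ gradU q := by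
    intro hp
    set lam : Fin m → ℝ := f q p with hlam
    -- p = E q *ᵥ lam
    have hpE : p = E q *ᵥ lam := by
      have := hp
      rw [hPT, Matrix.sub_mulVec, Matrix.one_mulVec, ← Matrix.mulVec_mulVec,
        ← Matrix.mulVec_mulVec, ← hf q p, ← hlam, sub_eq_zero] at this
      exact this
    -- the nonnegative auxiliary function χ
    set χ : (Fin n → ℝ) → ℝ :=
      fun q' => H q' p - U q' - (∑ K, lam K * f q' p K) + (1/2) * (lam ⬝ᵥ lam) with hχ
    have hχeq : ∀ q', χ q' =
        (1/2) * ((p - E q' *ᵥ lam) ⬝ᵥ ((M q')⁻¹ *ᵥ (p - E q' *ᵥ lam))) := by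
      intro q'
      have h1 : p ⬝ᵥ ((M q')⁻¹ *ᵥ (E q' *ᵥ lam)) = lam ⬝ᵥ f q' p := by
        rw [dp_symm _ (hMiT q'), mulVec_dp, ← hf q' p]
      have h1' : (E q' *ᵥ lam) ⬝ᵥ ((M q')⁻¹ *ᵥ p) = lam ⬝ᵥ f q' p := by
        rw [← dp_symm _ (hMiT q'), h1]
      have h2 : (E q' *ᵥ lam) ⬝ᵥ ((M q')⁻¹ *ᵥ (E q' *ᵥ lam)) = lam ⬝ᵥ lam := by
        rw [mulVec_dp, Matrix.mulVec_mulVec, Matrix.mulVec_mulVec, hEortho q',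
          Matrix.one_mulVec]
      rw [hχ]
      simp only [Matrix.mulVec_sub, dotProduct_sub, sub_dotProduct,
        h1, h1', h2, hH]
      have : (∑ K, lam K * f q' p K) = lam ⬝ᵥ f q' p := rfl
      rw [this]; ring
    have hχ0 : χ q = 0 := by
      have hv : p - E q *ᵥ lam = 0 := sub_eq_zero.mpr hpE
      rw [hχeq, hv]
      simp
    have hχnonneg : ∀ q', 0 ≤ χ q' := by
      intro q'
      rw [hχeq]
      have := (hMpos q').inv.posSemidef.dotProduct_mulVec_nonneg (p - E q' *ᵥ lam)
      simp only [star_trivial] at this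
      linarith
    -- χ has a global (hence local) minimum at q
    have hmin : IsLocalMin χ q := by
      apply Filter.Eventually.of_forall
      intro x
      rw [hχ0]; exact hχnonneg x
    -- differentiability of χ and its derivative
    have hdH : HasFDerivAt (fun q' => H q' p) (fderiv ℝ (fun q' => H q' p) q) q :=
      ((hHqdiff p) q).hasFDerivAt
    have hdU : HasFDerivAt U (fderiv ℝ U q) q := (hUdiff q).hasFDerivAt
    have hdf : HasFDerivAt (fun q' => ∑ K, lam K * f q' p K)
        (∑ K, lam K • fderiv ℝ (fun q' => f q' p K) q) q := by
      apply HasFDerivAt.fun_sum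
      intro K _
      exact ((hfdiff p K) q).hasFDerivAt.const_mul (lam K)
    have hdχ : HasFDerivAt χ
        (fderiv ℝ (fun q' => H q' p) q - fderiv ℝ U q
          - ∑ K, lam K • fderiv ℝ (fun q' => f q' p K) q) q := by
      exact ((hdH.sub hdU).sub hdf).add_const _
    have hzero : fderiv ℝ χ q = 0 := hmin.fderiv_eq_zero
    have hder : (fderiv ℝ (fun q' => H q' p) q - fderiv ℝ U q
        - ∑ K, lam K • fderiv ℝ (fun q' => f q' p K) q) = 0 := by
      rw [← hdχ.fderiv]; exact hzero
    -- evaluate at basis vectors to get the gradient identity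
    have hgrad : gradqH q p = gradU q + F q p *ᵥ lam := by
      funext j
      have hev := congrArg (fun (L : (Fin n → ℝ) →L[ℝ] ℝ) => L (Pi.single j 1)) hder
      simp only [ContinuousLinearMap.sub_apply, ContinuousLinearMap.sum_apply,
        ContinuousLinearMap.smul_apply, smul_eq_mul, ContinuousLinearMap.zero_apply,
        hgradqH, hgradU, hF, dotProduct_single, mul_one] at hev
      have hs : (∑ K, lam K * F q p j K) = (F q p *ᵥ lam) j := by
        simp [Matrix.mulVec, dotProduct, mul_comm]
      rw [hs] at hev
      simp only [Pi.add_apply]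
      linarith
    -- assemble the second equation
    have hPMp : 𝔭 q *ᵥ ((M q)⁻¹ *ᵥ p) = 0 := hfirst.mpr hp
    rw [hT, hgrad, Matrix.sub_mulVec, Matrix.mulVec_add]
    have hA : (E q * (F q p)ᵀ * 𝔭 q) *ᵥ ((M q)⁻¹ *ᵥ p) = 0 := by
      rw [← Matrix.mulVec_mulVec, ← Matrix.mulVec_mulVec, hPMp,
        Matrix.mulVec_zero, Matrix.mulVec_zero]
    have hB : ((𝔭 q)ᵀ * F q p * (E q)ᵀ) *ᵥ ((M q)⁻¹ *ᵥ p) = (𝔭 q)ᵀ *ᵥ (F q p *ᵥ lam) := by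
      rw [← Matrix.mulVec_mulVec, ← Matrix.mulVec_mulVec, ← hf q p, ← hlam]
    rw [hA, hB]
    abel
  constructor
  · rintro ⟨h1, h2⟩
    have hp := hfirst.mp h1
    refine ⟨hp, ?_⟩
    rw [← key2 hp]; exact h2
  · rintro ⟨hp, hU⟩
    exact ⟨hfirst.mpr hp, by rw [key2 hp]; exact hU⟩
end

section
/- Let n, m ∈ ℕ. Let M : ℝⁿ → Mat(n×n, ℝ) be a C¹ map taking values in symmetric positive-definite matrices, E : ℝⁿ → Mat(n×m, ℝ) a C¹ map with E(q)ᵀ M(q)⁻¹ E(q) = 1ₘ for all q, and U : ℝⁿ → ℝ a C¹ function. Define 𝔭(q) := 1ₙ − M(q)⁻¹ E(q) E(q)ᵀ, H(q,p) := ½ pᵀ M(q)⁻¹ p + U(q), f(q,p) := E(q)ᵀ M(q)⁻¹ p, F(q,p) := the n×m matrix with entries F(q,p)_{jK} = ∂ f_K(q,p)/∂q^j, and T(q,p) := E(q) F(q,p)ᵀ 𝔭(q) − 𝔭(q)ᵀ F(q,p) E(q)ᵀ. Suppose (q, p) : ℝ → ℝⁿ × ℝⁿ is differentiable, satisfies q̇(t)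 = 𝔭(q(t)) M(q(t))⁻¹ p(t) and ṗ(t) = −𝔭(q(t))ᵀ ∂_q H(q(t), p(t)) − T(q(t), p(t)) M(q(t))⁻¹ p(t) for all t, and has initial condition on the physical leaf, f(q(0), p(0)) = 0. Then for all t: (i) f(q(t), p(t)) = 0; (ii) q̇(t) = 𝔭(q(t)) ∂_p H(q(t), p(t)); and (iii) 𝔭(q(t))ᵀ (ṗ(t) + ∂_q H(q(t), p(t))) = 0. That is, the orbit stays on M_phys and satisfies the Euler–Lagrange equations of the Hölder variational principle, so the auxiliary constrained Hamiltonian system is an extension of the nonholonomic mechanical system. -/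
open Matrix

private lemma quadDeriv (n : ℕ) (A : Matrix (Fin n) (Fin n) ℝ) (c : ℝ) (y : Fin n → ℝ) :
    HasFDerivAt (fun y' : Fin n → ℝ => (1/2 : ℝ) * (y' ⬝ᵥ (A *ᵥ y')) + c)
      ((1/2 : ℝ) • ∑ k : Fin n, ∑ l : Fin n,
        A k l • (y k • (ContinuousLinearMap.proj l : (Fin n → ℝ) →L[ℝ] ℝ)
          + y l • (ContinuousLinearMap.proj k : (Fin n → ℝ) →L[ℝ] ℝ))) y := by
  have hrw : (fun y' : Fin n → ℝ => (1/2 : ℝ) * (y' ⬝ᵥ (A *ᵥ y')) + c)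
      = fun y' => (1/2 : ℝ) * (∑ k : Fin n, ∑ l : Fin n, A k l * (y' k * y' l)) + c := by
    funext y'
    congr 1
    congr 1
    simp only [Matrix.mulVec, dotProduct, Finset.mul_sum]
    exact Finset.sum_congr rfl fun k _ => Finset.sum_congr rfl fun l _ => by ring
  rw [hrw]
  have hterm : ∀ k l : Fin n, HasFDerivAt (fun y' : Fin n → ℝ => A k l * (y' k * y' l))
      (A k l • (y k • (ContinuousLinearMap.proj l : (Fin n → ℝ) →L[ℝ] ℝ)
          + y l • (ContinuousLinearMap.proj k : (Fin n → ℝ) →L[ℝ] ℝ))) y := by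
    intro k l
    have hk : HasFDerivAt (fun y' : Fin n → ℝ => y' k)
        (ContinuousLinearMap.proj k : (Fin n → ℝ) →L[ℝ] ℝ) y :=
      hasFDerivAt_apply k y
    have hl : HasFDerivAt (fun y' : Fin n → ℝ => y' l)
        (ContinuousLinearMap.proj l : (Fin n → ℝ) →L[ℝ] ℝ) y :=
      hasFDerivAt_apply l y
    exact (hk.mul hl).const_mul (A k l)
  exact ((HasFDerivAt.fun_sum (fun k _ => HasFDerivAt.fun_sum (fun l _ => hterm k l))).const_mul
    ((1:ℝ)/2)).add_const c

private lemma quadDerivApply (n : ℕ) (A : Matrix (Fin n) (Fin n) ℝ) (hAs : Aᵀ = A)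
    (y : Fin n → ℝ) (i : Fin n) :
    ((1/2 : ℝ) • ∑ k : Fin n, ∑ l : Fin n,
        A k l • (y k • (ContinuousLinearMap.proj l : (Fin n → ℝ) →L[ℝ] ℝ)
          + y l • (ContinuousLinearMap.proj k : (Fin n → ℝ) →L[ℝ] ℝ)))
      (Pi.single i 1) = (A *ᵥ y) i := by
  have hsym : ∀ k, A k i = A i k := fun k => by
    rw [← Matrix.transpose_apply A i k, hAs]
  simp only [ContinuousLinearMap.smul_apply, ContinuousLinearMap.sum_apply,
    ContinuousLinearMap.add_apply, ContinuousLinearMap.proj_apply, smul_eq_mul,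
    Pi.single_apply, mul_ite, mul_one, mul_zero, ite_mul, zero_mul,
    Finset.sum_ite_eq', Finset.mem_univ, if_true, mul_add, Finset.sum_add_distrib]
  have h2 : ∀ x : Fin n, (∑ x1 : Fin n, if x = i then A x x1 * y x1 else 0)
      = if x = i then ∑ x1 : Fin n, A x x1 * y x1 else 0 := fun x => by
    split <;> simp
  rw [Finset.sum_congr rfl fun x _ => h2 x, Finset.sum_ite_eq' Finset.univ i]
  simp only [Finset.mem_univ, if_true]
  simp only [Matrix.mulVec, dotProduct]
  rw [Finset.sum_congr rfl (fun k (_ : k ∈ Finset.univ) => by rw [hsym k] :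
    ∀ k ∈ Finset.univ, A k i * y k = A i k * y k)]
  ring

/-- A solution of the auxiliary constrained Hamiltonian system
with initial condition on the physical leaf (`f(q(0), p(0)) = 0`) stays on the
physical leaf for all times and satisfies the Euler–Lagrange equations of the
Hölder variational principle: `q̇ = 𝔭(q) ∂_p H` and
`𝔭(q)ᵀ (ṗ + ∂_q H) = 0`. -/
theorem stmt_14 (n m : ℕ)
    (M : (Fin n → ℝ) → Matrix (Fin n) (Fin n) ℝ)
    (E : (Fin n → ℝ) → Matrix (Fin n) (Fin m) ℝ)
    (U : (Fin n → ℝ) → ℝ)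
    (hMsym : ∀ q, (M q).IsSymm) (hMpos : ∀ q, (M q).PosDef)
    (hMdiff : ∀ i j, Differentiable ℝ (fun q => M q i j))
    (hEdiff : ∀ i j, Differentiable ℝ (fun q => E q i j))
    (hUdiff : Differentiable ℝ U)
    (hEortho : ∀ q, (E q)ᵀ * (M q)⁻¹ * E q = 1)
    (𝔭 : (Fin n → ℝ) → Matrix (Fin n) (Fin n) ℝ)
    (h𝔭 : ∀ q, 𝔭 q = 1 - (M q)⁻¹ * E q * (E q)ᵀ)
    (H : (Fin n → ℝ) → (Fin n → ℝ) → ℝ)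
    (hH : ∀ q p, H q p = (1/2) * (p ⬝ᵥ ((M q)⁻¹ *ᵥ p)) + U q)
    (f : (Fin n → ℝ) → (Fin n → ℝ) → (Fin m → ℝ))
    (hf : ∀ q p, f q p = (E q)ᵀ *ᵥ ((M q)⁻¹ *ᵥ p))
    (F : (Fin n → ℝ) → (Fin n → ℝ) → Matrix (Fin n) (Fin m) ℝ)
    (hfdiff : ∀ p K, Differentiable ℝ (fun q => f q p K))
    (hF : ∀ q p (K : Fin m) (w : Fin n → ℝ),
      fderiv ℝ (fun q' => f q' p K) q w = (fun j => F q p j K) ⬝ᵥ w)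
    (T : (Fin n → ℝ) → (Fin n → ℝ) → Matrix (Fin n) (Fin n) ℝ)
    (hT : ∀ q p, T q p = E q * (F q p)ᵀ * 𝔭 q - (𝔭 q)ᵀ * F q p * (E q)ᵀ)
    (gradqH : (Fin n → ℝ) → (Fin n → ℝ) → (Fin n → ℝ))
    (hHqdiff : ∀ p, Differentiable ℝ (fun q => H q p))
    (hgradqH : ∀ q p (w : Fin n → ℝ),
      fderiv ℝ (fun q' => H q' p) q w = gradqH q p ⬝ᵥ w)
    (gradpH : (Fin n → ℝ) → (Fin n → ℝ) → (Fin n → ℝ))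
    (hHpdiff : ∀ q, Differentiable ℝ (fun p => H q p))
    (hgradpH : ∀ q p (w : Fin n → ℝ),
      fderiv ℝ (fun p' => H q p') p w = gradpH q p ⬝ᵥ w)
    (q p : ℝ → (Fin n → ℝ))
    (hq : ∀ t : ℝ, HasDerivAt q (𝔭 (q t) *ᵥ ((M (q t))⁻¹ *ᵥ p t)) t)
    (hp : ∀ t : ℝ, HasDerivAt p
      (-((𝔭 (q t))ᵀ *ᵥ gradqH (q t) (p t))
        - T (q t) (p t) *ᵥ ((M (q t))⁻¹ *ᵥ p t)) t)
    (h0 : f (q 0) (p 0) = 0) :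
    ∀ t : ℝ,
      f (q t) (p t) = 0 ∧
      deriv q t = 𝔭 (q t) *ᵥ gradpH (q t) (p t) ∧
      (𝔭 (q t))ᵀ *ᵥ (deriv p t + gradqH (q t) (p t)) = 0 := by
  -- symmetry of the inverse metric
  have hAsym : ∀ x, ((M x)⁻¹)ᵀ = (M x)⁻¹ := fun x => by
    rw [Matrix.transpose_nonsing_inv, (hMsym x)]
  -- transpose of the projector
  have hPT : ∀ x, (𝔭 x)ᵀ = 1 - E x * (E x)ᵀ * (M x)⁻¹ := fun x => by
    rw [h𝔭]
    simp [Matrix.transpose_sub, Matrix.transpose_mul, hAsym x, Matrix.mul_assoc]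
  -- key identity 1 : Eᵀ M⁻¹ 𝔭ᵀ = 0
  have key1 : ∀ x, (E x)ᵀ * (M x)⁻¹ * (𝔭 x)ᵀ = 0 := by
    intro x
    rw [hPT x, Matrix.mul_sub, Matrix.mul_one]
    have h : (E x)ᵀ * (M x)⁻¹ * (E x * (E x)ᵀ * (M x)⁻¹)
        = ((E x)ᵀ * (M x)⁻¹ * E x) * ((E x)ᵀ * (M x)⁻¹) := by
      simp only [Matrix.mul_assoc]
    rw [h, hEortho x, Matrix.one_mul, sub_self]
  -- key identity 4 : 𝔭ᵀ E = 0
  have key4 : ∀ x, (𝔭 x)ᵀ * E x = 0 := by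
    intro x
    rw [hPT x, Matrix.sub_mul, Matrix.one_mul]
    have h : E x * (E x)ᵀ * (M x)⁻¹ * E x = E x * ((E x)ᵀ * (M x)⁻¹ * E x) := by
      simp only [Matrix.mul_assoc]
    rw [h, hEortho x, Matrix.mul_one, sub_self]
  -- key identity 3 : 𝔭ᵀ 𝔭ᵀ = 𝔭ᵀ
  have key3 : ∀ x, (𝔭 x)ᵀ * (𝔭 x)ᵀ = (𝔭 x)ᵀ := by
    intro x
    have h : (𝔭 x)ᵀ * (𝔭 x)ᵀ = (𝔭 x)ᵀ - E x * ((E x)ᵀ * (M x)⁻¹ * (𝔭 x)ᵀ) := by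
      nth_rewrite 1 [hPT x]
      rw [Matrix.sub_mul, Matrix.one_mul]
      simp only [Matrix.mul_assoc]
    rw [h, key1 x, Matrix.mul_zero, sub_zero]
  -- key identity 2 : Eᵀ M⁻¹ T = Fᵀ 𝔭
  have key2 : ∀ x y, (E x)ᵀ * (M x)⁻¹ * T x y = (F x y)ᵀ * 𝔭 x := by
    intro x y
    rw [hT, Matrix.mul_sub]
    have h1 : (E x)ᵀ * (M x)⁻¹ * (E x * (F x y)ᵀ * 𝔭 x)
        = ((E x)ᵀ * (M x)⁻¹ * E x) * ((F x y)ᵀ * 𝔭 x) := by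
      simp only [Matrix.mul_assoc]
    have h2 : (E x)ᵀ * (M x)⁻¹ * ((𝔭 x)ᵀ * F x y * (E x)ᵀ)
        = ((E x)ᵀ * (M x)⁻¹ * (𝔭 x)ᵀ) * (F x y * (E x)ᵀ) := by
      simp only [Matrix.mul_assoc]
    rw [h1, h2, hEortho x, key1 x, Matrix.one_mul, Matrix.zero_mul, sub_zero]
  -- key identity 5 : 𝔭ᵀ T = -(𝔭ᵀ F Eᵀ)
  have key5 : ∀ x y, (𝔭 x)ᵀ * T x y = -((𝔭 x)ᵀ * F x y * (E x)ᵀ) := by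
    intro x y
    rw [hT, Matrix.mul_sub]
    have h1 : (𝔭 x)ᵀ * (E x * (F x y)ᵀ * 𝔭 x) = ((𝔭 x)ᵀ * E x) * ((F x y)ᵀ * 𝔭 x) := by
      simp only [Matrix.mul_assoc]
    have h2 : (𝔭 x)ᵀ * ((𝔭 x)ᵀ * F x y * (E x)ᵀ) = ((𝔭 x)ᵀ * (𝔭 x)ᵀ) * (F x y * (E x)ᵀ) := by
      simp only [Matrix.mul_assoc]
    rw [h1, h2, key4 x, key3 x, Matrix.zero_mul, zero_sub, Matrix.mul_assoc]
  -- gradient of H in p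
  have hgradp : ∀ x y, gradpH x y = (M x)⁻¹ *ᵥ y := by
    intro x y
    funext i
    have hquad : HasFDerivAt (fun y' : Fin n → ℝ => H x y')
        ((1/2 : ℝ) • ∑ k : Fin n, ∑ l : Fin n,
          (M x)⁻¹ k l • (y k • (ContinuousLinearMap.proj l : (Fin n → ℝ) →L[ℝ] ℝ)
            + y l • (ContinuousLinearMap.proj k : (Fin n → ℝ) →L[ℝ] ℝ))) y := by
      have := quadDeriv n ((M x)⁻¹) (U x) y
      have hfun : (fun y' : Fin n → ℝ => H x y')
          = fun y' : Fin n → ℝ => (1/2 : ℝ) * (y' ⬝ᵥ ((M x)⁻¹ *ᵥ y')) + U x :=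
        funext fun y' => hH x y'
      rw [hfun]
      exact this
    have h := hgradpH x y (Pi.single i 1)
    rw [hquad.fderiv, quadDerivApply n ((M x)⁻¹) (hAsym x) y i] at h
    rw [dotProduct_single, mul_one] at h
    exact h.symm
  -- f as a linear map in p
  have hfB : ∀ x y, f x y = ((E x)ᵀ * (M x)⁻¹) *ᵥ y := fun x y => by
    rw [hf, Matrix.mulVec_mulVec]
  have hfsum : ∀ x (y : Fin n → ℝ) (K : Fin m),
      f x y K = ∑ j : Fin n, f x (Pi.single j 1) K * y j := by
    intro x y K
    simp only [hfB, Matrix.mulVec_single, mul_one]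
    simp only [Matrix.mulVec, dotProduct, MulOpposite.op_one, one_smul, Matrix.col_apply]
  -- F is linear in p
  have hFsum : ∀ x (y : Fin n → ℝ) (K : Fin m) (w : Fin n → ℝ),
      (fun j => F x y j K) ⬝ᵥ w
        = ∑ j : Fin n, ((fun l => F x (Pi.single j 1) l K) ⬝ᵥ w) * y j := by
    intro x y K w
    rw [← hF x y K w]
    have hfun : (fun x' => f x' y K) = fun x' => ∑ j : Fin n, f x' (Pi.single j 1) K * y j :=
      funext fun x' => hfsum x' y K
    have hsum : HasFDerivAt (fun x' => ∑ j : Fin n, f x' (Pi.single j 1) K * y j)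
        (∑ j : Fin n, y j • fderiv ℝ (fun x' => f x' (Pi.single j 1) K) x) x :=
      HasFDerivAt.fun_sum fun j _ =>
        ((hfdiff (Pi.single j 1) K x).hasFDerivAt).mul_const (y j)
    rw [hfun, hsum.fderiv]
    simp only [ContinuousLinearMap.sum_apply, ContinuousLinearMap.smul_apply, smul_eq_mul]
    exact Finset.sum_congr rfl fun j _ => by rw [hF x (Pi.single j 1) K w]; ring
  -- the constraint function is constant along the flow
  have hderiv0 : ∀ (K : Fin m) (t : ℝ), HasDerivAt (fun s => f (q s) (p s) K) 0 t := by
    intro K t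
    have hqc : ∀ j : Fin n, HasDerivAt (fun s => f (q s) (Pi.single j 1) K)
        (fderiv ℝ (fun x' => f x' (Pi.single j 1) K) (q t)
          (𝔭 (q t) *ᵥ ((M (q t))⁻¹ *ᵥ p t))) t :=
      fun j => ((hfdiff (Pi.single j 1) K (q t)).hasFDerivAt).comp_hasDerivAt t (hq t)
    have hpc : ∀ j : Fin n, HasDerivAt (fun s => p s j)
        ((-((𝔭 (q t))ᵀ *ᵥ gradqH (q t) (p t))
          - T (q t) (p t) *ᵥ ((M (q t))⁻¹ *ᵥ p t)) j) t :=
      fun j => (hasFDerivAt_apply j (p t)).comp_hasDerivAt t (hp t)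
    have hsum : HasDerivAt (fun s => ∑ j : Fin n, f (q s) (Pi.single j 1) K * p s j)
        (∑ j : Fin n,
          (fderiv ℝ (fun x' => f x' (Pi.single j 1) K) (q t)
              (𝔭 (q t) *ᵥ ((M (q t))⁻¹ *ᵥ p t)) * p t j
            + f (q t) (Pi.single j 1) K
              * (-((𝔭 (q t))ᵀ *ᵥ gradqH (q t) (p t))
                - T (q t) (p t) *ᵥ ((M (q t))⁻¹ *ᵥ p t)) j)) t :=
      HasDerivAt.fun_sum fun j _ => (hqc j).mul (hpc j)
    have hfun : (fun s => ∑ j : Fin n, f (q s) (Pi.single j 1) K * p s j)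
        = fun s => f (q s) (p s) K := funext fun s => (hfsum (q s) (p s) K).symm
    rw [hfun] at hsum
    convert hsum using 1
    symm
    -- show the total derivative vanishes
    rw [Finset.sum_add_distrib]
    have hA : ∑ j : Fin n,
        fderiv ℝ (fun x' => f x' (Pi.single j 1) K) (q t)
          (𝔭 (q t) *ᵥ ((M (q t))⁻¹ *ᵥ p t)) * p t j
        = ((F (q t) (p t))ᵀ *ᵥ (𝔭 (q t) *ᵥ ((M (q t))⁻¹ *ᵥ p t))) K := by
      rw [show ((F (q t) (p t))ᵀ *ᵥ (𝔭 (q t) *ᵥ ((M (q t))⁻¹ *ᵥ p t))) K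
          = (fun j => F (q t) (p t) j K) ⬝ᵥ (𝔭 (q t) *ᵥ ((M (q t))⁻¹ *ᵥ p t)) from by
        simp [Matrix.mulVec, dotProduct, Matrix.transpose_apply]]
      rw [hFsum]
      exact Finset.sum_congr rfl fun j _ => by
        rw [hF (q t) (Pi.single j 1) K]
    have hB : ∑ j : Fin n, f (q t) (Pi.single j 1) K
          * (-((𝔭 (q t))ᵀ *ᵥ gradqH (q t) (p t))
            - T (q t) (p t) *ᵥ ((M (q t))⁻¹ *ᵥ p t)) j
        = (((E (q t))ᵀ * (M (q t))⁻¹) *ᵥ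
            (-((𝔭 (q t))ᵀ *ᵥ gradqH (q t) (p t))
              - T (q t) (p t) *ᵥ ((M (q t))⁻¹ *ᵥ p t))) K := by
      simp only [hfB, Matrix.mulVec_single, mul_one]
      simp only [Matrix.mulVec, dotProduct, MulOpposite.op_one, one_smul, Matrix.col_apply]
    rw [hA, hB]
    have hvec : (F (q t) (p t))ᵀ *ᵥ (𝔭 (q t) *ᵥ ((M (q t))⁻¹ *ᵥ p t))
        + ((E (q t))ᵀ * (M (q t))⁻¹) *ᵥ
            (-((𝔭 (q t))ᵀ *ᵥ gradqH (q t) (p t))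
              - T (q t) (p t) *ᵥ ((M (q t))⁻¹ *ᵥ p t)) = 0 := by
      rw [Matrix.mulVec_sub, Matrix.mulVec_neg]
      simp only [Matrix.mulVec_mulVec]
      rw [← Matrix.mul_assoc ((E (q t))ᵀ * (M (q t))⁻¹) (T (q t) (p t)) ((M (q t))⁻¹),
        key2, key1, Matrix.zero_mulVec, neg_zero, zero_sub,
        Matrix.mul_assoc ((F (q t) (p t))ᵀ) (𝔭 (q t)) ((M (q t))⁻¹)]
      exact add_neg_cancel _
    have := congrFun hvec K
    simpa using this
  -- the orbit stays on the physical leaf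
  have hconst : ∀ t : ℝ, f (q t) (p t) = 0 := by
    intro t
    funext K
    have h := is_const_of_deriv_eq_zero (f := fun s => f (q s) (p s) K)
      (fun s => (hderiv0 K s).differentiableAt)
      (fun s => (hderiv0 K s).deriv) t 0
    rw [h, h0]
  intro t
  refine ⟨hconst t, ?_, ?_⟩
  · rw [(hq t).deriv, hgradp]
  · rw [(hp t).deriv]
    rw [Matrix.mulVec_add, Matrix.mulVec_sub, Matrix.mulVec_neg]
    simp only [Matrix.mulVec_mulVec]
    rw [key3, ← Matrix.mul_assoc ((𝔭 (q t))ᵀ) (T (q t) (p t)) ((M (q t))⁻¹), key5,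
      Matrix.neg_mul, Matrix.neg_mulVec]
    have hz : ((𝔭 (q t))ᵀ * F (q t) (p t) * (E (q t))ᵀ * (M (q t))⁻¹) *ᵥ p t = 0 := by
      have hassoc : (𝔭 (q t))ᵀ * F (q t) (p t) * (E (q t))ᵀ * (M (q t))⁻¹
          = ((𝔭 (q t))ᵀ * F (q t) (p t)) * ((E (q t))ᵀ * (M (q t))⁻¹) := by
        simp only [Matrix.mul_assoc]
      rw [hassoc, ← Matrix.mulVec_mulVec, ← hfB, hconst t, Matrix.mulVec_zero]
    rw [hz]
    abel
end
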